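/- For every odd prime power q, the number of points P ∈ Z(𝔽_q) such that Y₀² + Y₁² = 0 or X₃ = 0 (in homogeneous coordinates of P) equals 4q² − 2q + 2 + (4q² − 6q + 2)·χ(−1). -/

import Mathlib

/-!
Multiplying by `𝔽_qˣ` identifies the nonzero affine solutions of the (homogeneous) boundary
condition with (projective boundary points) × `𝔽_qˣ`, so it suffices to count affine solutions.
On `Z` one has `Y₀² + Y₁² = 4 X₀ X₃`, so the boundary is `X₀ X₃ = 0`. Over a fixed `X` the
number of `Y` is `∏ᵢ (1 + χ (Qᵢ X))` for the four quadratic forms `Qᵢ`; on `X₀ = 0`, on `X₃ = 0`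
and on `X₀ = X₃ = 0` this product splits into factors `(1 + χ (2bt)) (1 + χ (±2bt))` whose sums
over `t` are computed from `∑ χ = 0` and `∑ χ² = q - 1`, and inclusion–exclusion combines them.
-/

open scoped LinearAlgebra.Projectivization

/-- The defining condition of the Satake model `Z ⊂ ℙ⁷` in coordinates
`[Y₀ : Y₁ : Y₂ : Y₃ : X₀ : X₁ : X₂ : X₃] = [v 0 : ⋯ : v 7]`:
`Y₀² = 2(X₀X₃ + X₁X₂)`, `Y₁² = 2(X₀X₃ - X₁X₂)`,
`Y₂² = 2(X₀X₂ - X₁X₃)`, `Y₃² = 2(X₀X₂ + X₁X₃)`. -/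
def SatakeCond {F : Type*} [Field F] (v : Fin 8 → F) : Prop :=
  v 0 ^ 2 = 2 * (v 4 * v 7 + v 5 * v 6) ∧
  v 1 ^ 2 = 2 * (v 4 * v 7 - v 5 * v 6) ∧
  v 2 ^ 2 = 2 * (v 4 * v 6 - v 5 * v 7) ∧
  v 3 ^ 2 = 2 * (v 4 * v 6 + v 5 * v 7)

open Finset

theorem Fintype.sum_eq_add_card_sub_one_mul {α R : Type*} [Fintype α] [DecidableEq α] [Ring R]
    {f : α → R} (a : α) (b : R) (h : ∀ x ≠ a, f x = b) :
    ∑ x, f x = f a + (Fintype.card α - 1) * b := by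
  rw [Fintype.sum_eq_add_sum_compl a, Finset.sum_congr rfl fun x hx => h x (by simpa using hx),
    sum_const, card_compl, card_singleton, nsmul_eq_mul,
    Nat.cast_sub (Fintype.card_pos_iff.2 ⟨a⟩)]
  simp

theorem Fintype.sum₄_ite_eq_or_eq {α β γ δ M : Type*} [Fintype α] [Fintype β] [Fintype γ]
    [Fintype δ] [DecidableEq α] [DecidableEq δ] [AddCommGroup M] (G : α → β → γ → δ → M)
    (a₀ : α) (d₀ : δ) :
    ∑ a, ∑ b, ∑ c, ∑ d, (if a = a₀ ∨ d = d₀ then G a b c d else 0) =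
      ∑ b, ∑ c, ∑ d, G a₀ b c d + ∑ a, ∑ b, ∑ c, G a b c d₀ - ∑ b, ∑ c, G a₀ b c d₀ := by
  have h : ∀ a b c d, (if a = a₀ ∨ d = d₀ then G a b c d else 0) =
      (if a = a₀ then G a b c d else 0) + (if d = d₀ then G a b c d else 0) -
        (if a = a₀ then (if d = d₀ then G a b c d else 0) else 0) := by
    intro a b c d
    by_cases ha : a = a₀ <;> by_cases hd : d = d₀ <;> simp [ha, hd]
  simp only [h, sum_sub_distrib, sum_add_distrib, sum_ite_irrel, sum_const_zero,
    sum_ite_eq']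

theorem Nat.card_subtype_ne_zero_and_add_one {V : Type*} [Zero V] [Fintype V] [DecidableEq V]
    (P : V → Prop) [DecidablePred P] (h0 : P 0) :
    Nat.card {v : V // v ≠ 0 ∧ P v} + 1 = #{v | P v} := by
  rw [Nat.card_eq_fintype_card, Fintype.card_subtype,
    ← card_erase_add_one ((mem_filter_univ 0).2 h0)]
  congr 2
  ext v
  simp [and_comm]

namespace Projectivization

variable {k V : Type*} [DivisionRing k] [AddCommGroup V] [Module k V]

theorem card_subtype_rep_mul_card_units (P : V → Prop)
    (hP : ∀ (c : kˣ) (v : V), P v → P (c • v)) :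
    Nat.card {p : ℙ k V // P p.rep} * Nat.card kˣ = Nat.card {v : V // v ≠ 0 ∧ P v} := by
  let f : {p : ℙ k V // P p.rep} × kˣ → {v : V // v ≠ 0 ∧ P v} := fun x =>
    ⟨x.2 • x.1.1.rep, (smul_ne_zero_iff_ne _).2 x.1.1.rep_nonzero, hP _ _ x.1.2⟩
  have hf : Function.Bijective f := by
    constructor
    · rintro ⟨⟨p, hp⟩, a⟩ ⟨⟨p', hp'⟩, a'⟩ h
      have hv : a • p.rep = a' • p'.rep := congrArg Subtype.val h
      obtain rfl : p = p' := by
        rw [← p.mk_rep, ← p'.mk_rep, mk_eq_mk_iff]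
        exact ⟨a⁻¹ * a', by rw [mul_smul, ← hv, inv_smul_smul]⟩
      obtain rfl : a = a' := by
        refine Units.ext (smul_left_injective k p.rep_nonzero ?_)
        simpa only [Units.smul_def] using hv
      rfl
    · rintro ⟨v, hv, hPv⟩
      obtain ⟨a, ha⟩ := exists_smul_eq_mk_rep k v hv
      refine ⟨⟨⟨mk k v hv, ha ▸ hP a v hPv⟩, a⁻¹⟩, Subtype.ext ?_⟩
      simp only [f, ← ha, inv_smul_smul]
  rw [← Nat.card_prod, Nat.card_congr (Equiv.ofBijective f hf)]

theorem natCast_card_subtype_rep_mul_add_one [Fintype k] [Fintype V] [DecidableEq V]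
    (P : V → Prop) [DecidablePred P] (hP : ∀ (c : kˣ) (v : V), P v → P (c • v)) (h0 : P 0) :
    (Nat.card {p : ℙ k V // P p.rep} : ℤ) * (Fintype.card k - 1) + 1 = #{v | P v} := by
  rw [← Nat.card_subtype_ne_zero_and_add_one P h0, ← card_subtype_rep_mul_card_units P hP,
    Nat.card_units, Nat.card_eq_fintype_card (α := k)]
  push_cast [Nat.cast_sub Fintype.card_pos]
  ring

end Projectivization

section QuadraticChar

variable {F : Type*} [Field F] [Fintype F] [DecidableEq F]

local notation "χ" => quadraticChar F

theorem quadraticChar_card_pi_sqrts {ι : Type*} [Fintype ι] [DecidableEq ι]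
    (hF : ringChar F ≠ 2) (a : ι → F) :
    (#{y : ι → F | ∀ i, y i ^ 2 = a i} : ℤ) = ∏ i, (χ (a i) + 1) := by
  have : ({y : ι → F | ∀ i, y i ^ 2 = a i} : Finset _) =
      Fintype.piFinset fun i => ({x : F | x ^ 2 = a i} : Set F).toFinset := by
    ext y; simp
  rw [this, Fintype.card_piFinset, Nat.cast_prod]
  exact prod_congr rfl fun i _ => quadraticChar_card_sqrts hF (a i)

theorem quadraticChar_sum_sq : ∑ t : F, χ t ^ 2 = Fintype.card F - 1 := by
  rw [Fintype.sum_eq_add_card_sub_one_mul 0 1 fun t ht => quadraticChar_sq_one ht]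
  simp

end QuadraticChar

section SatakeCond

variable {F : Type*} [Field F]

instance [DecidableEq F] (v : Fin 8 → F) : Decidable (SatakeCond v) :=
  inferInstanceAs (Decidable (_ ∧ _ ∧ _ ∧ _))

theorem SatakeCond.smul {v : Fin 8 → F} (h : SatakeCond v) (c : F) : SatakeCond (c • v) := by
  obtain ⟨h0, h1, h2, h3⟩ := h
  simp only [SatakeCond, Pi.smul_apply, smul_eq_mul]
  exact ⟨by linear_combination c ^ 2 * h0, by linear_combination c ^ 2 * h1,
    by linear_combination c ^ 2 * h2, by linear_combination c ^ 2 * h3⟩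

theorem SatakeCond.sq_add_sq_eq_zero_iff (hF : ringChar F ≠ 2) {v : Fin 8 → F}
    (h : SatakeCond v) : v 0 ^ 2 + v 1 ^ 2 = 0 ↔ v 4 = 0 ∨ v 7 = 0 := by
  have h4 : (4 : F) ≠ 0 := by
    simpa [show (4 : F) = 2 ^ 2 by norm_num] using Ring.two_ne_zero hF
  have hsum : v 0 ^ 2 + v 1 ^ 2 = 4 * (v 4 * v 7) := by rw [h.1, h.2.1]; ring
  rw [hsum, mul_eq_zero, or_iff_right h4, mul_eq_zero]

end SatakeCond

namespace Satake

section Coordinates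

variable {F : Type*} [Field F]

def IsBoundary (v : Fin 8 → F) : Prop :=
  SatakeCond v ∧ (v 0 ^ 2 + v 1 ^ 2 = 0 ∨ v 7 = 0)

instance [DecidableEq F] : DecidablePred (IsBoundary (F := F)) :=
  fun v => inferInstanceAs (Decidable (SatakeCond v ∧ _))

theorem IsBoundary.smul {v : Fin 8 → F} (h : IsBoundary v) (c : F) : IsBoundary (c • v) := by
  refine ⟨h.1.smul c, h.2.imp (fun h01 => ?_) (fun h7 => ?_)⟩
  · simp only [Pi.smul_apply, smul_eq_mul]
    linear_combination c ^ 2 * h01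
  · simp [h7]

theorem isBoundary_iff (hF : ringChar F ≠ 2) (v : Fin 8 → F) :
    IsBoundary v ↔ SatakeCond v ∧ (v 4 = 0 ∨ v 7 = 0) :=
  and_congr_right fun h => by rw [h.sq_add_sq_eq_zero_iff hF, or_assoc, or_self]

def quadForms (a b c d : F) : Fin 4 → F :=
  ![2 * (a * d + b * c), 2 * (a * d - b * c), 2 * (a * c - b * d), 2 * (a * c + b * d)]

def coordEquiv (α : Type*) : (Fin 8 → α) ≃ α × α × α × α × (Fin 4 → α) where
  toFun v := (v 4, v 5, v 6, v 7, ![v 0, v 1, v 2, v 3])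
  invFun x := ![x.2.2.2.2 0, x.2.2.2.2 1, x.2.2.2.2 2, x.2.2.2.2 3, x.1, x.2.1, x.2.2.1, x.2.2.2.1]
  left_inv v := by funext j; fin_cases j <;> rfl
  right_inv := by
    rintro ⟨a, b, c, d, y⟩
    refine Prod.ext rfl (Prod.ext rfl (Prod.ext rfl (Prod.ext rfl ?_)))
    funext i; fin_cases i <;> rfl

theorem satakeCond_coordEquiv_symm (a b c d : F) (y : Fin 4 → F) :
    SatakeCond ((coordEquiv F).symm (a, b, c, d, y)) ↔ ∀ i, y i ^ 2 = quadForms a b c d i := by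
  rw [Fin.forall_fin_succ, Fin.forall_fin_succ, Fin.forall_fin_succ, Fin.forall_fin_one]
  rfl

end Coordinates

variable {F : Type*} [Field F] [Fintype F] [DecidableEq F]

local notation "χ" => quadraticChar F
local notation "q" => (Fintype.card F : ℤ)

def fibreCard (a b c d : F) : ℤ := ∏ i, (χ (quadForms a b c d i) + 1)

-- `#{(y, z) | y ^ 2 = t ∧ z ^ 2 = -t}` and `#{(y, z) | y ^ 2 = t ∧ z ^ 2 = t}`
def pairCountNeg (t : F) : ℤ := (χ t + 1) * (χ (-t) + 1)

def pairCountSame (t : F) : ℤ := (χ t + 1) ^ 2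

@[simp]
theorem pairCountNeg_zero : pairCountNeg (0 : F) = 1 := by simp [pairCountNeg]

@[simp]
theorem pairCountSame_zero : pairCountSame (0 : F) = 1 := by simp [pairCountSame]

theorem fibreCard_zero_left (b c d : F) :
    fibreCard 0 b c d = pairCountNeg (2 * b * c) * pairCountNeg (2 * b * d) := by
  simp only [fibreCard, quadForms, Fin.prod_univ_four, Matrix.cons_val_zero, Matrix.cons_val_one,
    Matrix.cons_val, pairCountNeg]
  ring_nf

theorem fibreCard_zero_right (a b c : F) :
    fibreCard a b c 0 = pairCountSame (2 * c * a) * pairCountNeg (2 * c * b) := by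
  simp only [fibreCard, quadForms, Fin.prod_univ_four, Matrix.cons_val_zero, Matrix.cons_val_one,
    Matrix.cons_val, pairCountNeg, pairCountSame]
  ring_nf

theorem fibreCard_zero_zero (b c : F) : fibreCard 0 b c 0 = pairCountNeg (2 * b * c) := by
  rw [fibreCard_zero_right, mul_zero, pairCountSame_zero, one_mul, mul_right_comm]

theorem sum_pairCountNeg (hF : ringChar F ≠ 2) :
    ∑ t : F, pairCountNeg t = q + (q - 1) * χ (-1) := by
  have h : ∀ t : F, pairCountNeg t = χ (-1) * χ t ^ 2 + (χ (-1) + 1) * χ t + 1 := fun t => by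
    rw [pairCountNeg, neg_eq_neg_one_mul t, map_mul]; ring
  simp only [h, sum_add_distrib, ← mul_sum, quadraticChar_sum_zero hF, quadraticChar_sum_sq,
    sum_const, card_univ, nsmul_eq_mul]
  ring

theorem sum_pairCountSame (hF : ringChar F ≠ 2) : ∑ t : F, pairCountSame t = 2 * q - 1 := by
  have h : ∀ t : F, pairCountSame t = χ t ^ 2 + 2 * χ t + 1 := fun t => by
    rw [pairCountSame]; ring
  simp only [h, sum_add_distrib, ← mul_sum, quadraticChar_sum_zero hF, quadraticChar_sum_sq,
    sum_const, card_univ, nsmul_eq_mul]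
  ring

omit [DecidableEq F] in
theorem sum_comp_two_mul {M : Type*} [AddCommMonoid M] (hF : ringChar F ≠ 2) (f : F → M)
    {b : F} (hb : b ≠ 0) :
    ∑ t, f (2 * b * t) = ∑ t, f t :=
  Equiv.sum_comp (Equiv.mulLeft₀ (2 * b) (mul_ne_zero (Ring.two_ne_zero hF) hb)) f

theorem sum_fibreCard_zero_left (hF : ringChar F ≠ 2) :
    ∑ b : F, ∑ c : F, ∑ d : F, fibreCard 0 b c d =
      q ^ 2 + (q - 1) * (q + (q - 1) * χ (-1)) ^ 2 := by
  simp only [fibreCard_zero_left, ← sum_mul_sum]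
  rw [Fintype.sum_eq_add_card_sub_one_mul 0 _ fun b hb => by
    rw [sum_comp_two_mul hF _ hb, sum_pairCountNeg hF]]
  simp only [mul_zero, zero_mul, pairCountNeg_zero, sum_const, card_univ, nsmul_eq_mul, mul_one]
  ring

theorem sum_fibreCard_zero_right (hF : ringChar F ≠ 2) :
    ∑ a : F, ∑ b : F, ∑ c : F, fibreCard a b c 0 =
      q ^ 2 + (q - 1) * ((2 * q - 1) * (q + (q - 1) * χ (-1))) := by
  simp only [fibreCard_zero_right]
  rw [sum_congr rfl fun a _ => sum_comm, sum_comm]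
  simp only [← sum_mul_sum]
  rw [Fintype.sum_eq_add_card_sub_one_mul 0 _ fun c hc => by
    rw [sum_comp_two_mul hF _ hc, sum_comp_two_mul hF _ hc, sum_pairCountNeg hF,
      sum_pairCountSame hF]]
  simp only [mul_zero, zero_mul, pairCountNeg_zero, pairCountSame_zero, sum_const, card_univ,
    nsmul_eq_mul, mul_one]
  ring

theorem sum_fibreCard_zero_zero (hF : ringChar F ≠ 2) :
    ∑ b : F, ∑ c : F, fibreCard 0 b c 0 = q + (q - 1) * (q + (q - 1) * χ (-1)) := by
  simp only [fibreCard_zero_zero]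
  rw [Fintype.sum_eq_add_card_sub_one_mul 0 _ fun b hb => by
    rw [sum_comp_two_mul hF _ hb, sum_pairCountNeg hF]]
  simp

theorem card_satakeCond_and (hF : ringChar F ≠ 2) :
    (#{v : Fin 8 → F | SatakeCond v ∧ (v 4 = 0 ∨ v 7 = 0)} : ℤ) =
      ∑ a : F, ∑ b : F, ∑ c : F, ∑ d : F, if a = 0 ∨ d = 0 then fibreCard a b c d else 0 := by
  rw [natCast_card_filter, ← (coordEquiv F).symm.sum_comp]
  simp only [Fintype.sum_prod_type]
  refine sum_congr rfl fun a _ => sum_congr rfl fun b _ => sum_congr rfl fun c _ =>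
    sum_congr rfl fun d _ => ?_
  have hv : ∀ y, (coordEquiv F).symm (a, b, c, d, y) 4 = a ∧
      (coordEquiv F).symm (a, b, c, d, y) 7 = d := fun _ => ⟨rfl, rfl⟩
  simp only [satakeCond_coordEquiv_symm, hv]
  split_ifs with h
  · simp only [h, and_true, fibreCard]
    convert (natCast_card_filter _ _).symm.trans (quadraticChar_card_pi_sqrts hF _)
  · simp [h]

theorem card_isBoundary (hF : ringChar F ≠ 2) :
    (#{v : Fin 8 → F | IsBoundary v} : ℤ) =
      q ^ 2 + (q - 1) * (q + (q - 1) * χ (-1)) ^ 2 +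
        (q ^ 2 + (q - 1) * ((2 * q - 1) * (q + (q - 1) * χ (-1)))) -
          (q + (q - 1) * (q + (q - 1) * χ (-1))) := by
  rw [filter_congr fun v _ => isBoundary_iff hF v, card_satakeCond_and hF,
    Fintype.sum₄_ite_eq_or_eq, sum_fibreCard_zero_left hF, sum_fibreCard_zero_right hF,
    sum_fibreCard_zero_zero hF]

end Satake

open Satake in
theorem satake_boundary_count (F : Type) [Field F] [Fintype F] [DecidableEq F]
    (hodd : ringChar F ≠ 2) :
    (Nat.card {p : ℙ F (Fin 8 → F) //
        SatakeCond p.rep ∧ (p.rep 0 ^ 2 + p.rep 1 ^ 2 = 0 ∨ p.rep 7 = 0)} : ℤ) =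
      4 * (Fintype.card F : ℤ) ^ 2 - 2 * (Fintype.card F : ℤ) + 2 +
        (4 * (Fintype.card F : ℤ) ^ 2 - 6 * (Fintype.card F : ℤ) + 2) *
          quadraticChar F (-1) := by
  have key := Projectivization.natCast_card_subtype_rep_mul_add_one (k := F) IsBoundary
    (fun c v hv => hv.smul (c : F)) (by simp [IsBoundary, SatakeCond])
  have hq : (Fintype.card F : ℤ) - 1 ≠ 0 := by
    have := Fintype.one_lt_card (α := F)
    omega
  have hχ : quadraticChar F (-1) ^ 2 = 1 := quadraticChar_sq_one (neg_ne_zero.2 one_ne_zero)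
  show (Nat.card {p : ℙ F (Fin 8 → F) // IsBoundary p.rep} : ℤ) = _
  refine mul_right_cancel₀ hq ?_
  linear_combination key + card_isBoundary hodd + ((Fintype.card F : ℤ) - 1) ^ 3 * hχ
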